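/- arXiv:1812.02878 — 2 statements merged into one kernel-verified Lean document; each statement's English description precedes it below -/
import Mathlib

section
/- Let g : ℝᵐ → ℝ be differentiable with L-Lipschitz gradient (L > 0), bounded below with infimum g*, and let Δ_g ≥ g(θ₀) − g*. Suppose θ_{t+1} = θ_t − (1/L) G_t for t = 0, …, T−1 where ‖G_t − ∇g(θ_t)‖ ≤ δ for all t. Then (1/T) Σ_{t=0}^{T−1} ‖∇g(θ_t)‖² ≤ δ² + 2LΔ_g/T. -/
/-!
Each step is a descent step for the `L`-smooth function `g`: the descent lemma
`g (x + v) ≤ g x + ⟪∇g x, v⟫ + L/2 ‖v‖²` at `v = -(1/L) G` gives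
`‖∇g x‖² ≤ 2L (g x - g (x - (1/L) G)) + ‖G - ∇g x‖²`.
Summing over `t < T` telescopes the function values to `g θ₀ - g θ_T ≤ Δ_g`.
-/

open scoped RealInnerProductSpace

section Smooth

variable {E : Type*} [NormedAddCommGroup E] [InnerProductSpace ℝ E] [CompleteSpace E]
  {g : E → ℝ} {L : ℝ}

theorem hasDerivAt_comp_add_smul (hdiff : Differentiable ℝ g) (x v : E) (s : ℝ) :
    HasDerivAt (fun s : ℝ => g (x + s • v)) ⟪gradient g (x + s • v), v⟫ s := by
  have hline : HasDerivAt (fun s : ℝ => x + s • v) v s := by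
    simpa using ((hasDerivAt_id s).smul_const v).const_add x
  exact (hdiff _).hasGradientAt.hasFDerivAt.comp_hasDerivAt s hline

theorem le_add_inner_gradient_add_of_lipschitz_gradient (hdiff : Differentiable ℝ g)
    (hsmooth : ∀ x y, ‖gradient g x - gradient g y‖ ≤ L * ‖x - y‖) (x v : E) :
    g (x + v) ≤ g x + ⟪gradient g x, v⟫ + L / 2 * ‖v‖ ^ 2 := by
  set φ : ℝ → ℝ := fun s => g (x + s • v) - s * ⟪gradient g x, v⟫ - L / 2 * s ^ 2 * ‖v‖ ^ 2
  have hφ (s : ℝ) : HasDerivAt φ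
      (⟪gradient g (x + s • v), v⟫ - ⟪gradient g x, v⟫ - L * s * ‖v‖ ^ 2) s := by
    have hquad := ((hasDerivAt_pow 2 s).const_mul (L / 2)).mul_const (‖v‖ ^ 2)
    refine (((hasDerivAt_comp_add_smul hdiff x v s).sub
      ((hasDerivAt_id s).mul_const ⟪gradient g x, v⟫)).sub hquad).congr_deriv ?_
    simp only [one_mul, Nat.cast_ofNat]
    ring
  have hφ_deriv_nonpos (s : ℝ) (hs : 0 < s) : deriv φ s ≤ 0 := by
    have hinner : ⟪gradient g (x + s • v) - gradient g x, v⟫ ≤ L * s * ‖v‖ ^ 2 :=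
      calc ⟪gradient g (x + s • v) - gradient g x, v⟫
          ≤ ‖gradient g (x + s • v) - gradient g x‖ * ‖v‖ := real_inner_le_norm _ _
        _ ≤ L * ‖(x + s • v) - x‖ * ‖v‖ := by gcongr; exact hsmooth _ _
        _ = L * s * ‖v‖ ^ 2 := by
          rw [add_sub_cancel_left, norm_smul, Real.norm_eq_abs, abs_of_pos hs]
          ring
    rw [(hφ s).deriv, ← inner_sub_left]
    linarith
  have hanti : AntitoneOn φ (Set.Ici 0) :=
    antitoneOn_of_deriv_nonpos (convex_Ici 0)
      (fun s _ => (hφ s).continuousAt.continuousWithinAt)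
      (fun s _ => (hφ s).differentiableAt.differentiableWithinAt)
      (fun s hs => hφ_deriv_nonpos s (by simpa using hs))
  have h10 : φ 1 ≤ φ 0 := hanti Set.self_mem_Ici (Set.mem_Ici.mpr zero_le_one) zero_le_one
  simp only [φ, one_smul, zero_smul, add_zero] at h10
  linarith

theorem sq_norm_gradient_le_of_inexact_step (hL : 0 < L) (hdiff : Differentiable ℝ g)
    (hsmooth : ∀ x y, ‖gradient g x - gradient g y‖ ≤ L * ‖x - y‖) (x G : E) :
    ‖gradient g x‖ ^ 2 ≤ 2 * L * (g x - g (x - (1 / L) • G)) + ‖G - gradient g x‖ ^ 2 := by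
  have hdesc := le_add_inner_gradient_add_of_lipschitz_gradient hdiff hsmooth x (-((1 / L) • G))
  have hquad : ⟪gradient g x, -((1 / L) • G)⟫ + L / 2 * ‖-((1 / L) • G)‖ ^ 2 =
      (‖G - gradient g x‖ ^ 2 - ‖gradient g x‖ ^ 2) / (2 * L) := by
    rw [inner_neg_right, norm_neg, real_inner_smul_right, norm_smul, mul_pow, norm_sub_sq_real,
      real_inner_comm, Real.norm_eq_abs, sq_abs]
    field_simp
    ring
  rw [← sub_eq_add_neg, add_assoc, hquad] at hdesc
  have hscaled : 2 * L * (g (x - (1 / L) • G) - g x) ≤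
      ‖G - gradient g x‖ ^ 2 - ‖gradient g x‖ ^ 2 :=
    (le_div_iff₀' (by positivity)).mp (by linarith)
  linarith

end Smooth

theorem sum_range_le_of_le_mul_sub_succ_add {a f : ℕ → ℝ} {c b : ℝ}
    (h : ∀ t, a t ≤ c * (f t - f (t + 1)) + b) (T : ℕ) :
    ∑ t ∈ Finset.range T, a t ≤ c * (f 0 - f T) + T * b :=
  calc ∑ t ∈ Finset.range T, a t
      ≤ ∑ t ∈ Finset.range T, (c * (f t - f (t + 1)) + b) := Finset.sum_le_sum fun t _ => h t
    _ = c * (f 0 - f T) + T * b := by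
      rw [Finset.sum_add_distrib, ← Finset.mul_sum, Finset.sum_range_sub', Finset.sum_const,
        Finset.card_range, nsmul_eq_mul]

theorem inexact_gradient_descent_avg_bound_general
    (m : ℕ) (g : EuclideanSpace ℝ (Fin m) → ℝ) (L gstar Δg δ : ℝ)
    (hL : 0 < L)
    (hdiff : Differentiable ℝ g)
    (hsmooth : ∀ x y, ‖gradient g x - gradient g y‖ ≤ L * ‖x - y‖)
    (hlb : ∀ x, gstar ≤ g x)
    (θ : ℕ → EuclideanSpace ℝ (Fin m)) (G : ℕ → EuclideanSpace ℝ (Fin m))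
    (hinit : g (θ 0) - gstar ≤ Δg)
    (herr : ∀ t, ‖G t - gradient g (θ t)‖ ≤ δ)
    (hiter : ∀ t, θ (t + 1) = θ t - (1 / L) • G t)
    (T : ℕ) :
    (1 / (T : ℝ)) * ∑ t ∈ Finset.range T, ‖gradient g (θ t)‖ ^ 2 ≤
      δ ^ 2 + 2 * L * Δg / (T : ℝ) := by
  have hstep (t : ℕ) :
      ‖gradient g (θ t)‖ ^ 2 ≤ 2 * L * (g (θ t) - g (θ (t + 1))) + δ ^ 2 := by
    rw [hiter]
    have herr_sq : ‖G t - gradient g (θ t)‖ ^ 2 ≤ δ ^ 2 :=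
      pow_le_pow_left₀ (norm_nonneg _) (herr t) 2
    linarith [sq_norm_gradient_le_of_inexact_step hL hdiff hsmooth (θ t) (G t)]
  have hsum := sum_range_le_of_le_mul_sub_succ_add hstep T
  have hdrop : 2 * L * (g (θ 0) - g (θ T)) ≤ 2 * L * Δg := by
    gcongr
    linarith [hlb (θ T)]
  rcases T.eq_zero_or_pos with rfl | hT
  · -- `1 / 0 = 0`, so the claim reads `0 ≤ δ ^ 2`.
    simp [sq_nonneg]
  have hT' : (0 : ℝ) < T := by exact_mod_cast hT
  rw [div_mul_eq_mul_div, one_mul, div_le_iff₀ hT', add_mul, div_mul_cancel₀ _ hT'.ne']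
  linarith

/-- Average gradient norm bound for inexact gradient descent: if `g` is `L`-smooth and
bounded below by `gstar`, `g(θ₀) - gstar ≤ Δ_g`, and `θ_{t+1} = θ_t - (1/L) G_t` with
`‖G_t - ∇g(θ_t)‖ ≤ δ`, then `(1/T) Σ_{t<T} ‖∇g(θ_t)‖² ≤ δ² + 2LΔ_g/T`. -/
theorem inexact_gradient_descent_avg_bound
    (m : ℕ) (g : EuclideanSpace ℝ (Fin m) → ℝ) (L gstar Δg δ : ℝ)
    (hL : 0 < L) (hδ : 0 ≤ δ)
    (hdiff : Differentiable ℝ g)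
    (hsmooth : ∀ x y, ‖gradient g x - gradient g y‖ ≤ L * ‖x - y‖)
    (hlb : ∀ x, gstar ≤ g x)
    (θ : ℕ → EuclideanSpace ℝ (Fin m)) (G : ℕ → EuclideanSpace ℝ (Fin m))
    (hinit : g (θ 0) - gstar ≤ Δg)
    (herr : ∀ t, ‖G t - gradient g (θ t)‖ ≤ δ)
    (hiter : ∀ t, θ (t + 1) = θ t - (1 / L) • G t)
    (T : ℕ) (hT : 0 < T) :
    (1 / (T : ℝ)) * ∑ t ∈ Finset.range T, ‖gradient g (θ t)‖ ^ 2 ≤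
      δ ^ 2 + 2 * L * Δg / (T : ℝ) :=
  inexact_gradient_descent_avg_bound_general m g L gstar Δg δ hL hdiff hsmooth hlb θ G hinit herr
    hiter T
end

section
/- Under the PL-game assumptions with cross-Lipschitz constant L₁₂, for any θ₁, θ₂ and any α₁ ∈ A(θ₁), the suboptimality of α₁ at θ₂ is bounded by g(θ₂) − f(θ₂, α₁) ≤ (L₁₂²/(2μ)) ‖θ₁ − θ₂‖². -/
/-!
At a maximizer `α₁` of `f(θ₁, ·)` the `α`-gradient vanishes, so the cross-Lipschitz bound
gives `‖∇_α f(θ₂, α₁)‖ ≤ L₁₂ ‖θ₁ - θ₂‖`; the PL inequality at `(θ₂, α₁)` turns this gradient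
bound into the bound `L₁₂² ‖θ₁ - θ₂‖² / (2μ)` on the suboptimality gap.
-/

/-- No differentiability is needed: at a point of non-differentiability the gradient is `0` by
convention. -/
theorem IsLocalMax.gradient_eq_zero {F : Type*} [NormedAddCommGroup F] [InnerProductSpace ℝ F]
    [CompleteSpace F] {f : F → ℝ} {a : F} (h : IsLocalMax f a) : gradient f a = 0 := by
  simp [gradient, h.fderiv_eq_zero]

theorem norm_gradient_le_of_isMaxOn {E F : Type*}
    [SeminormedAddCommGroup E] [NormedAddCommGroup F] [InnerProductSpace ℝ F] [CompleteSpace F]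
    {f : E × F → ℝ} {L : ℝ}
    (hcross : ∀ α θ₁ θ₂, ‖gradient (fun a => f (θ₁, a)) α - gradient (fun a => f (θ₂, a)) α‖
      ≤ L * ‖θ₁ - θ₂‖)
    {θ₁ θ₂ : E} {α₁ : F} (hmax : IsMaxOn (fun a => f (θ₁, a)) Set.univ α₁) :
    ‖gradient (fun a => f (θ₂, a)) α₁‖ ≤ L * ‖θ₁ - θ₂‖ := by
  have hzero : gradient (fun a => f (θ₁, a)) α₁ = 0 :=
    (hmax.isLocalMax Filter.univ_mem).gradient_eq_zero
  simpa [hzero] using hcross α₁ θ₁ θ₂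

theorem le_sq_div_of_mul_le_half_sq {μ gap r d : ℝ} (hμ : 0 < μ)
    (hPL : μ * gap ≤ 1 / 2 * r ^ 2) (hr₀ : 0 ≤ r) (hr : r ≤ d) : gap ≤ d ^ 2 / (2 * μ) := by
  rw [le_div_iff₀ (by positivity)]
  nlinarith [pow_le_pow_left₀ hr₀ hr 2]

theorem argmax_suboptimality_bound_general
    (m n : ℕ)
    (f : EuclideanSpace ℝ (Fin m) × EuclideanSpace ℝ (Fin n) → ℝ)
    (μ L₁₂ : ℝ) (g : EuclideanSpace ℝ (Fin m) → ℝ)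
    (hμ : 0 < μ)
    (hcross : ∀ (α : EuclideanSpace ℝ (Fin n)) (θ₁ θ₂ : EuclideanSpace ℝ (Fin m)),
      ‖gradient (fun a => f (θ₁, a)) α - gradient (fun a => f (θ₂, a)) α‖ ≤ L₁₂ * ‖θ₁ - θ₂‖)
    (hub : ∀ θ α, f (θ, α) ≤ g θ)
    (hPL : ∀ θ α, μ * (g θ - f (θ, α)) ≤ (1 / 2) * ‖gradient (fun a => f (θ, a)) α‖ ^ 2) :
    ∀ (θ₁ θ₂ : EuclideanSpace ℝ (Fin m)) (α₁ : EuclideanSpace ℝ (Fin n)),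
      f (θ₁, α₁) = g θ₁ →
      g θ₂ - f (θ₂, α₁) ≤ (L₁₂ ^ 2 / (2 * μ)) * ‖θ₁ - θ₂‖ ^ 2 := by
  intro θ₁ θ₂ α₁ hα₁
  have hmax : IsMaxOn (fun a => f (θ₁, a)) Set.univ α₁ := fun a _ =>
    show f (θ₁, a) ≤ f (θ₁, α₁) from hα₁ ▸ hub θ₁ a
  have hgrad := norm_gradient_le_of_isMaxOn hcross (θ₂ := θ₂) hmax
  have hgap := le_sq_div_of_mul_le_half_sq hμ (hPL θ₂ α₁) (norm_nonneg _) hgrad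
  calc g θ₂ - f (θ₂, α₁) ≤ (L₁₂ * ‖θ₁ - θ₂‖) ^ 2 / (2 * μ) := hgap
    _ = L₁₂ ^ 2 / (2 * μ) * ‖θ₁ - θ₂‖ ^ 2 := by ring

/-- Suboptimality bound for a maximizer at a nearby point: if `α₁ ∈ A(θ₁)` is a
maximizer of `f(θ₁, ·)`, then its suboptimality at `θ₂` satisfies
`g(θ₂) - f(θ₂, α₁) ≤ (L₁₂² / (2μ)) ‖θ₁ - θ₂‖²`. -/
theorem argmax_suboptimality_bound
    (m n : ℕ)
    (f : EuclideanSpace ℝ (Fin m) × EuclideanSpace ℝ (Fin n) → ℝ)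
    (μ L₁₂ : ℝ) (g : EuclideanSpace ℝ (Fin m) → ℝ)
    (hμ : 0 < μ)
    (hf : ContDiff ℝ 1 f)
    (hcross : ∀ (α : EuclideanSpace ℝ (Fin n)) (θ₁ θ₂ : EuclideanSpace ℝ (Fin m)),
      ‖gradient (fun a => f (θ₁, a)) α - gradient (fun a => f (θ₂, a)) α‖ ≤ L₁₂ * ‖θ₁ - θ₂‖)
    (hub : ∀ θ α, f (θ, α) ≤ g θ)
    (hattained : ∀ θ, ∃ α, f (θ, α) = g θ)
    (hPL : ∀ θ α, μ * (g θ - f (θ, α)) ≤ (1 / 2) * ‖gradient (fun a => f (θ, a)) α‖ ^ 2) :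
    ∀ (θ₁ θ₂ : EuclideanSpace ℝ (Fin m)) (α₁ : EuclideanSpace ℝ (Fin n)),
      f (θ₁, α₁) = g θ₁ →
      g θ₂ - f (θ₂, α₁) ≤ (L₁₂ ^ 2 / (2 * μ)) * ‖θ₁ - θ₂‖ ^ 2 :=
  argmax_suboptimality_bound_general m n f μ L₁₂ g hμ hcross hub hPL
end
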